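/- arXiv:2407.08943 — 2 statements merged into one kernel-verified Lean document; each statement's English description precedes it below -/
import Mathlib

section
/- Suppose k ≥ 1 and there exists an index i with I i > 0. Then the constrained optimal value function Q*_{≤k} is strictly decreasing on [0,1]: for all 0 ≤ α < α' ≤ 1, Q*_{≤k}(α') < Q*_{≤k}(α). -/
theorem stmt_6 (n : ℕ) (I : Fin n → ℝ) (R : Fin n → Fin n → ℝ)
    (hI : ∀ i, 0 ≤ I i) (hR : ∀ i j, 0 ≤ R i j)
    (hRsymm : ∀ i j, R i j = R j i) (hRdiag : ∀ i, R i i = 0)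
    (Q : (Fin n → ℝ) → ℝ → ℝ)
    (hQ : ∀ x α, Q x α =
      -α * (∑ i, I i * x i) + (1 - α) * (∑ i, ∑ j, R i j * x i * x j))
    (k : ℕ) (hk1 : 1 ≤ k) (hkn : k ≤ n)
    (hIpos : ∃ i, 0 < I i) :
    StrictAntiOn (fun α : ℝ => sInf {q : ℝ | ∃ x : Fin n → ℝ,
      (∀ i, x i = 0 ∨ x i = 1) ∧ (∑ i, x i) ≤ (k : ℝ) ∧ q = Q x α})
      (Set.Icc (0 : ℝ) 1) := by
  set Bin : Set (Fin n → ℝ) := {x | ∀ i, x i = 0 ∨ x i = 1} with hBin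
  have hBinFin : Bin.Finite := by
    apply Set.Finite.subset (Set.Finite.pi (fun i : Fin n => ((Set.finite_singleton (1:ℝ)).insert 0)))
    intro x hx
    intro i _
    rcases hx i with h | h <;> simp [h]
  set F : ℝ → Set ℝ := fun α => {q : ℝ | ∃ x : Fin n → ℝ,
      (∀ i, x i = 0 ∨ x i = 1) ∧ (∑ i, x i) ≤ (k : ℝ) ∧ q = Q x α} with hF
  have hFfin : ∀ α, (F α).Finite := by
    intro α
    apply Set.Finite.subset (hBinFin.image (fun x => Q x α))
    rintro q ⟨x, hx, _, rfl⟩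
    exact ⟨x, hx, rfl⟩
  have hFne : ∀ α, (F α).Nonempty := by
    intro α
    exact ⟨Q (fun _ => 0) α, (fun _ => 0), fun i => Or.inl rfl, by simp, rfl⟩
  have hle : ∀ α (x : Fin n → ℝ), (∀ i, x i = 0 ∨ x i = 1) → (∑ i, x i) ≤ (k : ℝ) →
      sInf (F α) ≤ Q x α := by
    intro α x hx hxk
    exact csInf_le (hFfin α).bddBelow ⟨x, hx, hxk, rfl⟩
  intro a ha a' ha' hlt
  -- minimizer at a
  obtain ⟨x, hx, hxk, hxq⟩ := (hFne a).csInf_mem (hFfin a)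
  have hxnn : ∀ i, 0 ≤ x i := fun i => by rcases hx i with h | h <;> simp [h]
  have hSI : 0 ≤ ∑ i, I i * x i :=
    Finset.sum_nonneg fun i _ => mul_nonneg (hI i) (hxnn i)
  have hSR : 0 ≤ ∑ i, ∑ j, R i j * x i * x j :=
    Finset.sum_nonneg fun i _ => Finset.sum_nonneg fun j _ =>
      mul_nonneg (mul_nonneg (hR i j) (hxnn i)) (hxnn j)
  rcases lt_or_eq_of_le (by positivity : (0:ℝ) ≤ (∑ i, I i * x i) + ∑ i, ∑ j, R i j * x i * x j) with hpos | hzero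
  · -- strictly decreasing at x
    calc sInf (F a') ≤ Q x a' := hle a' x hx hxk
      _ < Q x a := by rw [hQ, hQ]; nlinarith
      _ = sInf (F a) := hxq.symm
  · have hSI0 : (∑ i, I i * x i) = 0 := by linarith [hSI, hSR, hzero.symm ▸ (le_refl (0:ℝ))]
    have hSR0 : (∑ i, ∑ j, R i j * x i * x j) = 0 := by linarith
    have hQx0 : Q x a = 0 := by rw [hQ, hSI0, hSR0]; ring
    obtain ⟨i0, hi0⟩ := hIpos
    set x0 : Fin n → ℝ := fun j => if j = i0 then 1 else 0 with hx0
    have hx0bin : ∀ i, x0 i = 0 ∨ x0 i = 1 := by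
      intro i; by_cases h : i = i0 <;> simp [x0, h]
    have hx0k : (∑ i, x0 i) ≤ (k : ℝ) := by
      simp only [x0, Finset.sum_ite_eq', Finset.mem_univ, if_true]
      exact_mod_cast hk1
    have hQx0' : Q x0 a' = -a' * I i0 := by
      rw [hQ]
      have h1 : ∑ i, I i * x0 i = I i0 := by simp [x0, mul_ite]
      have h2 : ∑ i, ∑ j, R i j * x0 i * x0 j = 0 := by
        simp [x0, mul_ite, ite_mul, hRdiag]
      rw [h1, h2]; ring
    have ha'pos : 0 < a' := lt_of_le_of_lt ha.1 hlt
    calc sInf (F a') ≤ Q x0 a' := hle a' x0 hx0bin hx0k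
      _ = -a' * I i0 := hQx0'
      _ < 0 := by nlinarith
      _ = Q x a := hQx0.symm
      _ = sInf (F a) := hxq.symm
end

section
/- Let α, α' ∈ ℝ with α < α', let x be a binary vector that globally minimizes Q(·, α) over binary vectors, and let x' be a binary vector that globally minimizes Q(·, α') over binary vectors. Then (Σ_i I i · x i) + (Σ_i Σ_j R i j · x i · x j) ≤ (Σ_i I i · x'_i) + (Σ_i Σ_j R i j · x'_i · x'_j); that is, the combined importance-plus-redundancy value of optimal solutions is monotone non-decreasing in α (the precise sense in which the optimal solution grows as α increases from 0 to 1). -/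
theorem stmt_11 (n : ℕ) (I : Fin n → ℝ) (R : Fin n → Fin n → ℝ)
    (hI : ∀ i, 0 ≤ I i) (hR : ∀ i j, 0 ≤ R i j)
    (hRsymm : ∀ i j, R i j = R j i) (hRdiag : ∀ i, R i i = 0)
    (Q : (Fin n → ℝ) → ℝ → ℝ)
    (hQ : ∀ x α, Q x α =
      -α * (∑ i, I i * x i) + (1 - α) * (∑ i, ∑ j, R i j * x i * x j))
    (α α' : ℝ) (hαα' : α < α')
    (x x' : Fin n → ℝ)
    (hx : ∀ i, x i = 0 ∨ x i = 1) (hx' : ∀ i, x' i = 0 ∨ x' i = 1)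
    (hxopt : ∀ y : Fin n → ℝ, (∀ i, y i = 0 ∨ y i = 1) → Q x α ≤ Q y α)
    (hx'opt : ∀ y : Fin n → ℝ, (∀ i, y i = 0 ∨ y i = 1) → Q x' α' ≤ Q y α') :
    (∑ i, I i * x i) + (∑ i, ∑ j, R i j * x i * x j) ≤
      (∑ i, I i * x' i) + (∑ i, ∑ j, R i j * x' i * x' j) := by
  have h1 := hxopt x' hx'
  have h2 := hx'opt x hx
  rw [hQ, hQ] at h1 h2
  nlinarith [h1, h2, hαα']
end
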